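/- Order the vertices I = {i₁,...,i_r} of the quiver so that k > l whenever there is an arrow i_k → i_l. Then in the skew power series ring A, the product P_{i₁}(t)···P_{i_r}(t) equals P(t) = Σ_{d∈ℕ^I} e_d(q) t^d, where P_i(t) = Σ_{n≥0} q^{-n²} Π_{j=1}^n (1-q^{-j})⁻¹ t^{n·i} and e_d(q) = q^{-⟨d,d⟩} Π_{i∈I} Π_{j=1}^{d_i} (1-q^{-j})⁻¹. -/

import Mathlib

/- STATEMENT 14: Order the vertices I = {i₁,...,i_r} of the quiver so that k > l whenever
there is an arrow i_k → i_l. Then in the skew power series ring A, the product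
P_{i₁}(t)···P_{i_r}(t) equals P(t) = Σ_{d∈ℕ^I} e_d(q) t^d. -/

open scoped Classical

abbrev SkewPS (I S : Type*) := (I →₀ ℕ) → S

noncomputable def skewMul {I S : Type*} [Fintype I] [DecidableEq I] [CommRing S] (q : Sˣ)
    (E : (I →₀ ℕ) → (I →₀ ℕ) → ℤ) (P Q : SkewPS I S) : SkewPS I S :=
  fun f => ∑ p ∈ Finset.HasAntidiagonal.antidiagonal f, ((q ^ (-(E p.2 p.1)) : Sˣ) : S) * P p.1 * Q p.2

noncomputable def tpow {I S : Type*} [CommRing S] (d : I →₀ ℕ) : SkewPS I S :=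
  fun f => if f = d then 1 else 0

noncomputable abbrev K := RatFunc ℚ

noncomputable def qK : Kˣ := Units.mk0 RatFunc.X RatFunc.X_ne_zero

/-- The Euler form `⟨d,e⟩ = Σ_i d_i e_i - Σ_{α:i→j} d_i e_j` of the quiver with
`a i j` arrows from `i` to `j`. -/
def eulerForm {I : Type*} [Fintype I] (a : I → I → ℕ) (d e : I →₀ ℕ) : ℤ :=
  ∑ i, (d i : ℤ) * (e i : ℤ) - ∑ i, ∑ j, (a i j : ℤ) * (d i : ℤ) * (e j : ℤ)

/-- `e_d(q) = q^{-⟨d,d⟩} Π_{i∈I} Π_{j=1}^{d_i} (1-q^{-j})⁻¹`. -/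
noncomputable def eCoeff {I : Type*} [Fintype I] (E : (I →₀ ℕ) → (I →₀ ℕ) → ℤ)
    (d : I →₀ ℕ) : K :=
  (qK : K) ^ (-(E d d)) *
    ∏ i : I, ∏ j ∈ Finset.range (d i), (1 - (qK : K) ^ (-(j + 1 : ℤ)))⁻¹

/-- The series supported on the ray `ℕ·d` with coefficient `c n` at `t^{nd}`. -/
noncomputable def alongRay {I : Type*} (d : I →₀ ℕ) (c : ℕ → K) : SkewPS I K :=
  fun f => if h : ∃ n : ℕ, f = n • d then c h.choose else 0

/-- `q^{-n²} Π_{j=1}^n (1-q^{-j})⁻¹`, the coefficients of `P_i(t)`. -/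
noncomputable def expCoeff (n : ℕ) : K :=
  (qK : K) ^ (-(n : ℤ) ^ 2) * (∏ j ∈ Finset.range n, (1 - (qK : K) ^ (-(j + 1 : ℤ))))⁻¹

/-!
Add the vertices one at a time from the right. If `k` precedes every vertex of `L`, a monomial
`t^d` with support in `k :: L` arises in `P_k · (series supported on L)` only as
`t^{d_k k} · t^{d - d_k k}`, with twist `q^{-⟨d - d_k k, d_k k⟩}`. Since no arrow leaves `k`
towards `k :: L`, `⟨d_k k, d - d_k k⟩ = 0` and `⟨d_k k, d_k k⟩ = d_k²`, so expanding
`⟨d, d⟩` bilinearly shows that this twist is exactly what turns `expCoeff d_k · e_{d - d_k k}`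
into `e_d`.
-/

open Finsupp Finset.HasAntidiagonal

section SkewSeries

variable {I S : Type*} [Fintype I] [DecidableEq I] [CommRing S]

theorem skewMul_apply_of_ray_support (q : Sˣ) (E : (I →₀ ℕ) → (I →₀ ℕ) → ℤ)
    {P F : SkewPS I S} (k : I) (hP : ∀ p, P p ≠ 0 → p = single k (p k))
    (hF : ∀ p, p k ≠ 0 → F p = 0) (d : I →₀ ℕ) :
    skewMul q E P F d =
      ((q ^ (-E (d.erase k) (single k (d k))) : Sˣ) : S) * P (single k (d k)) * F (d.erase k) := by
  refine Finset.sum_eq_single_of_mem (single k (d k), d.erase k)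
    (mem_antidiagonal.2 (single_add_erase k d)) ?_
  rintro ⟨p₁, p₂⟩ hp hne
  rw [mem_antidiagonal] at hp
  by_cases hp₂ : p₂ k = 0
  · suffices P p₁ = 0 by rw [this, mul_zero, zero_mul]
    by_contra hp₁
    have hp₁k : p₁ k = d k := by simpa [hp₂] using congrArg (· k) hp
    have hray : p₁ = single k (d k) := hp₁k ▸ hP p₁ hp₁
    refine hne (Prod.ext hray (add_left_cancel (a := p₁) ?_))
    rw [hp, hray, single_add_erase]
  · rw [hF p₂ hp₂, mul_zero]

end SkewSeries

theorem alongRay_single_apply_single {I : Type*} (k : I) (c : ℕ → K) (n : ℕ) :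
    alongRay (single k 1) c (single k n) = c n := by
  have h : ∃ m : ℕ, single k n = m • single k 1 := ⟨n, by rw [smul_single_one]⟩
  rw [alongRay, dif_pos h]
  have hm := h.choose_spec
  rw [smul_single_one] at hm
  exact congrArg c (single_injective k hm).symm

theorem eq_single_of_alongRay_single_ne_zero {I : Type*} {k : I} {c : ℕ → K} {p : I →₀ ℕ}
    (h : alongRay (single k 1) c p ≠ 0) : p = single k (p k) := by
  by_contra hp
  refine h (dif_neg ?_)
  rintro ⟨n, rfl⟩
  simp at hp

section EulerForm

variable {I : Type*} [Fintype I] (a : I → I → ℕ)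

theorem eulerForm_add_left (d d' e : I →₀ ℕ) :
    eulerForm a (d + d') e = eulerForm a d e + eulerForm a d' e := by
  simp only [eulerForm, coe_add, Pi.add_apply, Nat.cast_add, add_mul, mul_add,
    Finset.sum_add_distrib]
  ring

theorem eulerForm_add_right (d e e' : I →₀ ℕ) :
    eulerForm a d (e + e') = eulerForm a d e + eulerForm a d e' := by
  simp only [eulerForm, coe_add, Pi.add_apply, Nat.cast_add, mul_add, Finset.sum_add_distrib]
  ring

theorem eulerForm_single_left (k : I) (n : ℕ) (e : I →₀ ℕ) :
    eulerForm a (single k n) e = n * e k - ∑ j, (a k j : ℤ) * n * e j := by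
  simp [eulerForm, single_apply]

theorem eulerForm_self_eq_erase_add (k : I) (d : I →₀ ℕ) (hk : ∀ j, d j ≠ 0 → a k j = 0) :
    eulerForm a d d = eulerForm a (d.erase k) (d.erase k) +
      eulerForm a (d.erase k) (single k (d k)) + (d k : ℤ) ^ 2 := by
  have hkk : (a k k : ℤ) * d k = 0 := by
    by_cases h : d k = 0 <;> simp [h, hk k]
  have hdiag : eulerForm a (single k (d k)) (single k (d k)) = (d k : ℤ) ^ 2 := by
    rw [eulerForm_single_left, Fintype.sum_eq_single k (fun j hj => by simp [hj.symm])]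
    simp only [single_eq_same]
    linear_combination (-(d k : ℤ)) * hkk
  have hvanish : eulerForm a (single k (d k)) (d.erase k) = 0 := by
    rw [eulerForm_single_left, erase_same, Nat.cast_zero, mul_zero, zero_sub, neg_eq_zero]
    refine Finset.sum_eq_zero fun j _ => ?_
    by_cases hj : d j = 0
    · by_cases hjk : j = k <;> simp [hj, hjk, erase_ne]
    · simp [hk j hj]
  conv_lhs => rw [← single_add_erase k d]
  rw [eulerForm_add_left, eulerForm_add_right, eulerForm_add_right, hdiag, hvanish]
  ring

end EulerForm

theorem prod_range_eq_mul_prod_erase {I : Type*} [Fintype I] {M : Type*} [CommMonoid M]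
    (f : ℕ → M) (k : I) (d : I →₀ ℕ) :
    ∏ i, ∏ j ∈ Finset.range (d i), f j =
      (∏ j ∈ Finset.range (d k), f j) * ∏ i, ∏ j ∈ Finset.range (d.erase k i), f j := by
  let g : I → ℕ → M := fun _ n => ∏ j ∈ Finset.range n, f j
  have h₀ : ∀ i, g i 0 = 1 := fun _ => Finset.prod_range_zero f
  rw [← prod_fintype d g h₀, ← prod_fintype (d.erase k) g h₀, mul_prod_erase' d k g h₀]

theorem eCoeff_eulerForm_eq_mul_erase {I : Type*} [Fintype I] (a : I → I → ℕ) (k : I)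
    (d : I →₀ ℕ) (hk : ∀ j, d j ≠ 0 → a k j = 0) :
    eCoeff (eulerForm a) d = (qK : K) ^ (-eulerForm a (d.erase k) (single k (d k))) *
      expCoeff (d k) * eCoeff (eulerForm a) (d.erase k) := by
  rw [eCoeff, eCoeff, expCoeff, eulerForm_self_eq_erase_add a k d hk,
    prod_range_eq_mul_prod_erase _ k d, ← Finset.prod_inv_distrib]
  have hq : (qK : K) ≠ 0 := qK.ne_zero
  simp only [neg_add, zpow_add₀ hq]
  ring

theorem foldr_alongRay_expCoeff_eq {I : Type*} [Fintype I] [LinearOrder I] (a : I → I → ℕ)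
    (hord : ∀ k l, a k l ≠ 0 → l < k) (L : List I) (hL : L.Pairwise (· < ·)) :
    (L.map fun i => alongRay (single i 1) expCoeff).foldr (skewMul qK (eulerForm a)) (tpow 0) =
      fun d => if d.support ⊆ L.toFinset then eCoeff (eulerForm a) d else 0 := by
  induction L with
  | nil =>
    funext d
    by_cases hd : d = 0
    · simp [hd, tpow, eCoeff, eulerForm]
    · simp [hd, tpow]
  | cons k L ih =>
    obtain ⟨hkL, hL⟩ := List.pairwise_cons.1 hL
    have hk : k ∉ L.toFinset := fun h => lt_irrefl k (hkL k (List.mem_toFinset.1 h))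
    funext d
    simp only [List.map_cons, List.foldr_cons, ih hL]
    rw [skewMul_apply_of_ray_support qK _ k (fun _ => eq_single_of_alongRay_single_ne_zero)
      (fun p hp => if_neg fun hsub => hk (hsub (mem_support_iff.2 hp))) d,
      alongRay_single_apply_single, support_erase]
    simp only [List.toFinset_cons, Finset.subset_insert_iff]
    split_ifs with hsub
    · have hak : ∀ j, d j ≠ 0 → a k j = 0 := fun j hj => by
        by_contra hne
        obtain rfl | hjk := eq_or_ne j k
        · exact lt_irrefl j (hord j j hne)
        · have hjL := hsub (Finset.mem_erase.2 ⟨hjk, mem_support_iff.2 hj⟩)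
          exact lt_asymm (hkL j (List.mem_toFinset.1 hjL)) (hord k j hne)
      rw [eCoeff_eulerForm_eq_mul_erase a k d hak, Units.val_zpow_eq_zpow_val]
    · rw [mul_zero]

theorem product_over_vertices_eq_full_series
    (r : ℕ) (a : Fin r → Fin r → ℕ)
    -- no oriented cycles, vertices ordered so that arrows i_k → i_l have l < k
    (hord : ∀ k l, a k l ≠ 0 → l < k) :
    ((List.finRange r).map
        (fun i => alongRay (Finsupp.single i 1) expCoeff)).foldr
      (skewMul qK (eulerForm a)) (tpow 0) =
    fun d => eCoeff (eulerForm a) d := by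
  rw [foldr_alongRay_expCoeff_eq a hord _ (List.pairwise_lt_finRange r), List.toFinset_finRange]
  simp only [Finset.subset_univ, if_true]
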